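/- Let Φ(z) = νz + d with ν ≠ 0, d ≠ 0 and |ν| ≤ 1, and let Υ be an entire function on ℂ such that C_{Υ,Φ} is bounded on H_E(ζ). If C_{Υ,Φ} is self-adjoint, then Υ(z) = α K_{Φ(0)}(z) for all z ∈ ℂ, where α = ζ₀² \overline{Υ(0)} is a real number, and one of the following holds: (i) Υ(0) = 0, in which case Υ ≡ 0 and C_{Υ,Φ} = 0; or (ii) Υ(0) ≠ 0 and ν is a real number. -/

import Mathlib

open Filter ContinuousLinearMap
open scoped ComplexConjugate

noncomputable section

/-- The weighted Hardy space of entire functions `H_E(ζ)`, realized as the Hilbert space of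
coefficient sequences: an entire function `g z = ∑ bₙ zⁿ` with `∑ |bₙ|² ζₙ² < ∞` is encoded by
the `ℓ²`-sequence `n ↦ bₙ * ζₙ`.  With this identification the `lp`-inner product
`⟪f, g⟫ = ∑ conj (f n) * g n` is exactly `∑ conj bₙ * cₙ * ζₙ²` (Mathlib's convention:
conjugate-linear in the first variable). -/
abbrev HE (_ζ : ℕ → ℝ) : Type := lp (fun _ : ℕ => ℂ) 2

/-- The `n`-th Taylor coefficient `bₙ` of an element of `H_E(ζ)`. -/
def HE.coeff (ζ : ℕ → ℝ) (f : HE ζ) (n : ℕ) : ℂ := f n / (ζ n : ℂ)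

/-- The entire function `z ↦ ∑ bₙ zⁿ` represented by an element of `H_E(ζ)`. -/
def HE.toFun (ζ : ℕ → ℝ) (f : HE ζ) : ℂ → ℂ := fun z => ∑' n, HE.coeff ζ f n * z ^ n

/-! Evaluation at `p` is the inner product with the kernel `K p`, so the adjoint of `T = C_{Υ,Φ}`
maps `K p` to `conj (Υ p) • K (Φ p)`. For self-adjoint `T`, taking `p = 0` (where `K 0` is the
constant `ζ₀⁻²`) gives `Υ = ζ₀² conj (Υ 0) K_d`, and evaluating at `0` shows that `Υ 0` is real.
If `Υ 0 = 0`, every `T f` vanishes as a function, hence `T = 0`: the growth of `ζ` makes the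
Taylor series of each element converge on all of `ℂ`, so the function determines its coefficients.
Otherwise the diagonal entry `⟪e₁, T e₁⟫ = (Υ Φ)'(0) = ζ₀² Υ 0 |d|² / ζ₁² + Υ 0 ν` is real,
which forces `ν` to be real. -/

open FormalMultilinearSeries
open scoped InnerProductSpace

lemma eventually_pow_le_of_tendsto_rpow_one_div {a : ℕ → ℝ} (ha : ∀ n, 0 ≤ a n)
    (hlim : Tendsto (fun n : ℕ => a n ^ ((1 : ℝ) / n)) atTop atTop) {R : ℝ} (hR : 0 ≤ R) :
    ∀ᶠ n in atTop, R ^ n ≤ a n := by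
  filter_upwards [hlim.eventually_ge_atTop R, eventually_ne_atTop 0] with n hn hn0
  calc R ^ n ≤ (a n ^ ((1 : ℝ) / n)) ^ n := by gcongr
    _ = a n := by
      rw [← Real.rpow_natCast, ← Real.rpow_mul (ha n), one_div_mul_cancel (by exact_mod_cast hn0),
        Real.rpow_one]

lemma IsSelfAdjoint.conj_apply_lpSingle_self {𝕜 ι : Type*} [RCLike 𝕜] [DecidableEq ι]
    {T : lp (fun _ : ι => 𝕜) 2 →L[𝕜] lp (fun _ : ι => 𝕜) 2} (hT : IsSelfAdjoint T) (i : ι) :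
    conj (T (lp.single 2 i 1) i) = T (lp.single 2 i 1) i := by
  have h := hT.isSymmetric.conj_inner_sym (lp.single 2 i 1) (lp.single 2 i 1)
  simpa [lp.inner_single_left, lp.inner_single_right] using h.symm

namespace HE

variable {ζ : ℕ → ℝ}

lemma norm_coeff_le (f : HE ζ) (n : ℕ) : ‖coeff ζ f n‖ ≤ ‖f‖ / |ζ n| := by
  rw [coeff, norm_div, Complex.norm_real, Real.norm_eq_abs]
  gcongr
  exact lp.norm_apply_le_norm two_ne_zero f n

lemma toFun_eq_ofScalarsSum (f : HE ζ) : toFun ζ f = ofScalarsSum (E := ℂ) (coeff ζ f) := by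
  ext z
  simp [toFun, ofScalars_sum_eq]

lemma toFun_apply_zero (f : HE ζ) : toFun ζ f 0 = coeff ζ f 0 := by
  simp [toFun_eq_ofScalarsSum]

lemma toFun_smul (c : ℂ) (f : HE ζ) (z : ℂ) : toFun ζ (c • f) z = c * toFun ζ f z := by
  simp only [toFun, coeff, lp.coeFn_smul, Pi.smul_apply, smul_eq_mul, ← tsum_mul_left]
  exact tsum_congr fun n => by ring

lemma toFun_single (n : ℕ) (a : ℂ) (z : ℂ) : toFun ζ (lp.single 2 n a) z = a / ζ n * z ^ n := by
  rw [toFun, tsum_eq_single n fun m hm => by simp [coeff, hm]]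
  simp [coeff]

lemma radius_ofScalars_coeff (hζ : ∀ n, 0 < ζ n)
    (hlim : Tendsto (fun n : ℕ => ζ n ^ ((1 : ℝ) / n)) atTop atTop) (f : HE ζ) :
    (ofScalars ℂ (coeff ζ f)).radius = ⊤ := by
  refine ENNReal.eq_top_of_forall_nnreal_le fun r => le_radius_of_eventually_le _ ‖f‖ ?_
  filter_upwards [eventually_pow_le_of_tendsto_rpow_one_div (fun n => (hζ n).le) hlim r.coe_nonneg]
    with n hn
  have hf := norm_coeff_le f n
  rw [abs_of_pos (hζ n)] at hf
  rw [ofScalars_norm]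
  calc ‖coeff ζ f n‖ * r ^ n ≤ ‖f‖ / ζ n * ζ n :=
        mul_le_mul hf hn (by positivity) (div_nonneg (norm_nonneg _) (hζ n).le)
    _ = ‖f‖ := div_mul_cancel₀ _ (hζ n).ne'

lemma hasFPowerSeriesOnBall_toFun (hζ : ∀ n, 0 < ζ n)
    (hlim : Tendsto (fun n : ℕ => ζ n ^ ((1 : ℝ) / n)) atTop atTop) (f : HE ζ) :
    HasFPowerSeriesOnBall (toFun ζ f) (ofScalars ℂ (coeff ζ f)) 0 ⊤ := by
  have h := (ofScalars ℂ (coeff ζ f)).hasFPowerSeriesOnBall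
    (by simp [radius_ofScalars_coeff hζ hlim f])
  rwa [radius_ofScalars_coeff hζ hlim f, ← ofScalarsSum, ← toFun_eq_ofScalarsSum] at h

lemma eq_zero_of_toFun_eq_zero (hζ : ∀ n, 0 < ζ n)
    (hlim : Tendsto (fun n : ℕ => ζ n ^ ((1 : ℝ) / n)) atTop atTop) {f : HE ζ}
    (hf : toFun ζ f = 0) : f = 0 := by
  have h := (hasFPowerSeriesOnBall_toFun hζ hlim f).hasFPowerSeriesAt
  rw [hf] at h
  have hc : coeff ζ f = 0 := (ofScalars_series_eq_zero ℂ).mp h.eq_zero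
  ext n
  simpa [coeff, (hζ n).ne'] using congrFun hc n

lemma hasDerivAt_toFun_zero (hζ : ∀ n, 0 < ζ n)
    (hlim : Tendsto (fun n : ℕ => ζ n ^ ((1 : ℝ) / n)) atTop atTop) (f : HE ζ) :
    HasDerivAt (toFun ζ f) (coeff ζ f 1) 0 := by
  simpa using (hasFPowerSeriesOnBall_toFun hζ hlim f).hasFPowerSeriesAt.hasDerivAt

lemma apply_eq_coeff_mul {n : ℕ} (hn : ζ n ≠ 0) (f : HE ζ) : f n = coeff ζ f n * ζ n :=
  (div_mul_cancel₀ _ (Complex.ofReal_ne_zero.mpr hn)).symm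

lemma inner_kernel_left (hζ : ∀ n, ζ n ≠ 0) {k : HE ζ} {p : ℂ}
    (hk : ∀ n, coeff ζ k n = conj p ^ n / (ζ n : ℂ) ^ 2) (f : HE ζ) :
    ⟪k, f⟫_ℂ = toFun ζ f p := by
  rw [lp.inner_eq_tsum, toFun]
  refine tsum_congr fun n => ?_
  have hζn : (ζ n : ℂ) ≠ 0 := by exact_mod_cast hζ n
  rw [apply_eq_coeff_mul (hζ n) k, apply_eq_coeff_mul (hζ n) f, hk, RCLike.inner_apply]
  simp only [map_mul, map_div₀, map_pow, Complex.conj_conj, Complex.conj_ofReal]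
  field_simp

variable {K : ℂ → HE ζ} {Υ Φ : ℂ → ℂ} {T : HE ζ →L[ℂ] HE ζ}

lemma adjoint_apply_kernel (hζ : ∀ n, ζ n ≠ 0)
    (hK : ∀ p n, coeff ζ (K p) n = conj p ^ n / (ζ n : ℂ) ^ 2)
    (hT : ∀ f z, toFun ζ (T f) z = Υ z * toFun ζ f (Φ z)) (p : ℂ) :
    adjoint T (K p) = conj (Υ p) • K (Φ p) := by
  refine ext_inner_right ℂ fun f => ?_
  rw [adjoint_inner_left, inner_smul_left, inner_kernel_left hζ (hK p),
    inner_kernel_left hζ (hK _), hT, Complex.conj_conj]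

lemma toFun_kernel_zero (hK : ∀ p n, coeff ζ (K p) n = conj p ^ n / (ζ n : ℂ) ^ 2) (w : ℂ) :
    toFun ζ (K 0) w = 1 / (ζ 0 : ℂ) ^ 2 := by
  rw [toFun, tsum_eq_single 0 fun n hn => by simp [hK, hn]]
  simp [hK]

lemma eq_mul_toFun_of_apply_kernel_zero (hζ : ∀ n, ζ n ≠ 0)
    (hK : ∀ p n, coeff ζ (K p) n = conj p ^ n / (ζ n : ℂ) ^ 2)
    (hT : ∀ f z, toFun ζ (T f) z = Υ z * toFun ζ f (Φ z)) {c : ℂ} {k : HE ζ}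
    (hTK : T (K 0) = c • k) (z : ℂ) :
    Υ z = (ζ 0 : ℂ) ^ 2 * c * toFun ζ k z := by
  have h := hT (K 0) z
  rw [hTK, toFun_smul, toFun_kernel_zero hK] at h
  have hζ0 : (ζ 0 : ℂ) ≠ 0 := by exact_mod_cast hζ 0
  field_simp at h
  linear_combination -h

lemma apply_single_one_one (hζ : ∀ n, 0 < ζ n)
    (hlim : Tendsto (fun n : ℕ => ζ n ^ ((1 : ℝ) / n)) atTop atTop)
    (hT : ∀ f z, toFun ζ (T f) z = Υ z * toFun ζ f (Φ z))
    {Υ' Φ' : ℂ} (hΥ : HasDerivAt Υ Υ' 0) (hΦ : HasDerivAt Φ Φ' 0) :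
    T (lp.single 2 1 1) 1 = Υ' * Φ 0 + Υ 0 * Φ' := by
  have hζ1 : (ζ 1 : ℂ) ≠ 0 := by exact_mod_cast (hζ 1).ne'
  have hTe : toFun ζ (T (lp.single 2 1 1)) = fun z => Υ z * Φ z / ζ 1 := by
    ext z
    rw [hT, toFun_single]
    ring
  have h := hasDerivAt_toFun_zero hζ hlim (T (lp.single 2 1 1))
  rw [hTe] at h
  rw [apply_eq_coeff_mul (hζ 1).ne', h.unique ((hΥ.mul hΦ).div_const _)]
  field_simp

end HE

theorem weighted_composition_selfAdjoint_necessary_general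
    (ζ : ℕ → ℝ) (hζ : ∀ n, 0 < ζ n)
    (hlim : Tendsto (fun n : ℕ => (ζ n) ^ ((1 : ℝ) / n)) atTop atTop)
    (ν d : ℂ)
    (Υ : ℂ → ℂ)
    (K : ℂ → HE ζ) (hK : ∀ p n, HE.coeff ζ (K p) n = (conj p) ^ n / (ζ n : ℂ) ^ 2)
    (T : HE ζ →L[ℂ] HE ζ)
    (hT : ∀ f : HE ζ, ∀ z : ℂ, HE.toFun ζ (T f) z = Υ z * HE.toFun ζ f (ν * z + d)) :
    IsSelfAdjoint T →
      ((∀ z : ℂ, Υ z = (ζ 0 : ℂ) ^ 2 * conj (Υ 0) * HE.toFun ζ (K d) z) ∧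
       (∃ r : ℝ, (ζ 0 : ℂ) ^ 2 * conj (Υ 0) = (r : ℂ)) ∧
       ((Υ 0 = 0 ∧ (∀ z : ℂ, Υ z = 0) ∧ T = 0) ∨
        (Υ 0 ≠ 0 ∧ ∃ r : ℝ, ν = (r : ℂ)))) := by
  intro hsa
  have hζ' : ∀ n, ζ n ≠ 0 := fun n => (hζ n).ne'
  have hTK : T (K 0) = conj (Υ 0) • K d := by
    simpa [← star_eq_adjoint, hsa.star_eq] using HE.adjoint_apply_kernel hζ' hK hT 0
  have hΥ := HE.eq_mul_toFun_of_apply_kernel_zero hζ' hK hT hTK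
  have hΥ0 : conj (Υ 0) = Υ 0 := by
    have h := hΥ 0
    rw [HE.toFun_apply_zero, hK, pow_zero] at h
    field_simp [hζ' 0] at h
    exact h.symm
  refine ⟨hΥ, ⟨ζ 0 ^ 2 * (Υ 0).re, ?_⟩, ?_⟩
  · rw [hΥ0]
    push_cast
    rw [Complex.conj_eq_iff_re.mp hΥ0]
  by_cases h0 : Υ 0 = 0
  · have hΥ_zero : ∀ z, Υ z = 0 := fun z => by simp [hΥ z, h0]
    refine Or.inl ⟨h0, hΥ_zero, ContinuousLinearMap.ext fun f => ?_⟩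
    exact HE.eq_zero_of_toFun_eq_zero hζ hlim (funext fun z => by simp [hT, hΥ_zero])
  · refine Or.inr ⟨h0, Complex.conj_eq_iff_real.mp ?_⟩
    have hΥ' : HasDerivAt Υ ((ζ 0 : ℂ) ^ 2 * conj (Υ 0) * HE.coeff ζ (K d) 1) 0 :=
      ((HE.hasDerivAt_toFun_zero hζ hlim (K d)).const_mul _).congr_of_eventuallyEq
        (Eventually.of_forall hΥ)
    have h11 := hsa.conj_apply_lpSingle_self 1
    rw [HE.apply_single_one_one hζ hlim hT hΥ' (((hasDerivAt_id 0).const_mul ν).add_const d), hK]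
      at h11
    simp only [map_add, map_mul, map_div₀, map_pow, map_zero, map_one,
      Complex.conj_conj, Complex.conj_ofReal, hΥ0] at h11
    exact mul_left_cancel₀ h0 (by linear_combination h11)

/-- For `Φ z = ν z + d` with `ν ≠ 0`, `d ≠ 0`, `|ν| ≤ 1` and entire `Υ` with `C_{Υ,Φ}`
bounded on `H_E(ζ)`: if `C_{Υ,Φ}` is self-adjoint then `Υ z = α K_{Φ 0} z` where
`α = ζ₀² conj (Υ 0)` is real, and either (i) `Υ 0 = 0`, whence `Υ ≡ 0` and `C_{Υ,Φ} = 0`,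
or (ii) `Υ 0 ≠ 0` and `ν` is real. -/
theorem weighted_composition_selfAdjoint_necessary
    (ζ : ℕ → ℝ) (hζ : ∀ n, 0 < ζ n)
    (hlim : Tendsto (fun n : ℕ => (ζ n) ^ ((1 : ℝ) / n)) atTop atTop)
    (ν d : ℂ) (hν0 : ν ≠ 0) (hd : d ≠ 0) (hν : ‖ν‖ ≤ 1)
    (Υ : ℂ → ℂ) (hΥ : Differentiable ℂ Υ)
    (K : ℂ → HE ζ) (hK : ∀ p n, HE.coeff ζ (K p) n = (conj p) ^ n / (ζ n : ℂ) ^ 2)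
    (T : HE ζ →L[ℂ] HE ζ)
    (hT : ∀ f : HE ζ, ∀ z : ℂ, HE.toFun ζ (T f) z = Υ z * HE.toFun ζ f (ν * z + d)) :
    IsSelfAdjoint T →
      ((∀ z : ℂ, Υ z = (ζ 0 : ℂ) ^ 2 * conj (Υ 0) * HE.toFun ζ (K d) z) ∧
       (∃ r : ℝ, (ζ 0 : ℂ) ^ 2 * conj (Υ 0) = (r : ℂ)) ∧
       ((Υ 0 = 0 ∧ (∀ z : ℂ, Υ z = 0) ∧ T = 0) ∨
        (Υ 0 ≠ 0 ∧ ∃ r : ℝ, ν = (r : ℂ)))) :=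
  weighted_composition_selfAdjoint_necessary_general ζ hζ hlim ν d Υ K hK T hT
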